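/- arXiv:1410.2556 — 2 statements merged into one kernel-verified Lean document; each statement's English description precedes it below -/
import Mathlib

section
/- For any two convex bodies K, L in R^n, max_{x0 ∈ R^n} |K ∩ (x0 - L)| · |K + L| ≤ binom(2n, n) |K| |L|. -/
/-!
Fix `x₀` and put `M = |K ∩ (x₀ - L)|`. For `y = k + l ∈ K + L`, the homothety with centre
`k` and ratio `1 - s` maps `K ∩ (x₀ - L)` into `K ∩ (x₀ + s (y - x₀) - L)`, so the section
function `f x = |K ∩ (x - L)|` satisfies `f (x₀ + s a) ≥ (1 - s)ⁿ M` for all `a ∈ A = K + L - x₀`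
and `s ∈ [0, 1]`. Writing `(1 - s₀)ⁿ = ∫_{s₀}^1 n (1 - s)ⁿ⁻¹ ds` and integrating this bound
over `u = s a` (Fubini in `(u, s)`) yields `∫ f ≥ M |A| ∫₀¹ n (1 - s)ⁿ⁻¹ sⁿ ds`, and this
Beta integral equals `1 / C(2n, n)`. On the other hand `∫ f = |K| |L|` by Fubini.
-/

open MeasureTheory Set Pointwise Module
open scoped ENNReal Nat

theorem integral_pow_mul_one_sub_pow (a b : ℕ) :
    ∫ x in (0:ℝ)..1, x ^ a * (1 - x) ^ b = (a ! * b ! : ℝ) / (a + b + 1)! := by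
  apply Complex.ofReal_injective
  have h := Complex.Gamma_mul_Gamma_eq_betaIntegral (s := a + 1) (t := b + 1)
    (by simp; positivity) (by simp; positivity)
  rw [Complex.betaIntegral] at h
  simp only [add_sub_cancel_right, Complex.cpow_natCast] at h
  rw [show (a + 1 : ℂ) + (b + 1) = ((a + b + 1 : ℕ) : ℂ) + 1 by push_cast; ring] at h
  rw [Complex.Gamma_nat_eq_factorial, Complex.Gamma_nat_eq_factorial,
    Complex.Gamma_nat_eq_factorial] at h
  rw [← intervalIntegral.integral_ofReal]
  push_cast
  rw [h, mul_div_cancel_left₀ _ (by exact_mod_cast (a + b + 1).factorial_ne_zero)]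

lemma lintegral_Icc_mul_one_sub_pow_pred {n : ℕ} (hn : 0 < n) {g : ℝ} (hg : g ≤ 1) :
    ∫⁻ s in Icc g 1, ENNReal.ofReal (n * (1 - s) ^ (n - 1)) = ENNReal.ofReal ((1 - g) ^ n) := by
  have hderiv : ∀ s, HasDerivAt (fun s : ℝ => -(1 - s) ^ n) (n * (1 - s) ^ (n - 1)) s := by
    intro s
    simpa using (((hasDerivAt_id s).const_sub 1).fun_pow n).fun_neg
  have hcont : Continuous fun s : ℝ => (n : ℝ) * (1 - s) ^ (n - 1) := by fun_prop
  rw [← restrict_Ioc_eq_restrict_Icc,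
    ← ofReal_integral_eq_lintegral_ofReal hcont.integrableOn_Ioc,
    ← intervalIntegral.integral_of_le hg, intervalIntegral.integral_eq_sub_of_hasDerivAt
      (fun s _ => hderiv s) (hcont.intervalIntegrable _ _)]
  · simp [zero_pow hn.ne']
  · filter_upwards [ae_restrict_mem measurableSet_Ioc] with s hs
    have : 0 ≤ 1 - s := by linarith [hs.2]
    positivity

lemma lintegral_Icc_mul_one_sub_pow_pred_mul_pow {n : ℕ} (hn : 0 < n) :
    ∫⁻ s in Icc 0 1, ENNReal.ofReal (n * (1 - s) ^ (n - 1)) * ENNReal.ofReal (s ^ n) =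
      ((2 * n).choose n : ℝ≥0∞)⁻¹ := by
  have hchoose_pos : (0 : ℝ) < (2 * n).choose n := by exact_mod_cast Nat.choose_pos (by omega)
  have hchoose : ((2 * n).choose n * n ! * n ! : ℝ) = (2 * n)! := by
    have := Nat.choose_mul_factorial_mul_factorial (show n ≤ 2 * n by omega)
    rw [show 2 * n - n = n by omega] at this
    exact_mod_cast this
  have hbeta :
      ∫ s in (0:ℝ)..1, n * (1 - s) ^ (n - 1) * s ^ n = ((2 * n).choose n : ℝ)⁻¹ := by
    simp_rw [mul_assoc, mul_comm _ (_ ^ n)]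
    rw [intervalIntegral.integral_const_mul, integral_pow_mul_one_sub_pow,
      show n + (n - 1) + 1 = 2 * n by omega, ← hchoose, ← Nat.mul_factorial_pred hn.ne']
    push_cast
    field_simp
  have hcont : Continuous fun s : ℝ => (n : ℝ) * (1 - s) ^ (n - 1) * s ^ n := by fun_prop
  have hnonneg : ∀ s ∈ Icc (0:ℝ) 1, 0 ≤ (n : ℝ) * (1 - s) ^ (n - 1) := fun s hs => by
    have : 0 ≤ 1 - s := by linarith [hs.2]
    positivity
  rw [setLIntegral_congr_fun measurableSet_Icc
      (fun s hs => (ENNReal.ofReal_mul (hnonneg s hs)).symm),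
    ← restrict_Ioc_eq_restrict_Icc,
    ← ofReal_integral_eq_lintegral_ofReal hcont.integrableOn_Ioc,
    ← intervalIntegral.integral_of_le zero_le_one, hbeta,
    ENNReal.ofReal_inv_of_pos hchoose_pos, ENNReal.ofReal_natCast]
  filter_upwards [ae_restrict_mem measurableSet_Ioc] with s hs
  have := hnonneg s (Ioc_subset_Icc_self hs)
  have : 0 ≤ s := hs.1.le
  positivity

lemma setLIntegral_mul_one_sub_pow_pred_mul_le {n : ℕ} (hn : 0 < n) {T : Set ℝ}
    (hT : IsCompact T) (hT01 : T ⊆ Icc 0 1) {M c : ℝ≥0∞}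
    (h : ∀ s ∈ T, ENNReal.ofReal ((1 - s) ^ n) * M ≤ c) :
    (∫⁻ s in T, ENNReal.ofReal (n * (1 - s) ^ (n - 1))) * M ≤ c := by
  rcases T.eq_empty_or_nonempty with rfl | hne
  · simp
  have hmin : sInf T ∈ T := hT.sInf_mem hne
  calc (∫⁻ s in T, ENNReal.ofReal (n * (1 - s) ^ (n - 1))) * M
      ≤ (∫⁻ s in Icc (sInf T) 1, ENNReal.ofReal (n * (1 - s) ^ (n - 1))) * M := by
        gcongr
        exact fun s hs => ⟨csInf_le hT.bddBelow hs, (hT01 hs).2⟩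
    _ = ENNReal.ofReal ((1 - sInf T) ^ n) * M := by
        rw [lintegral_Icc_mul_one_sub_pow_pred hn (hT01 hmin).2]
    _ ≤ c := h _ hmin

lemma Set.mem_singleton_sub_iff {G : Type*} [AddCommGroup G] {x y : G} {L : Set G} :
    y ∈ {x} - L ↔ x - y ∈ L := by
  rw [singleton_sub, image_sub_left, mem_preimage, neg_add_eq_sub]

theorem lintegral_measure_inter_singleton_sub {G : Type*} [MeasurableSpace G] [AddCommGroup G]
    [MeasurableAdd₂ G] [MeasurableNeg G] (μ : Measure G) [SFinite μ] [μ.IsAddRightInvariant]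
    {K L : Set G} (hK : MeasurableSet K) (hL : MeasurableSet L) :
    ∫⁻ x, μ (K ∩ ({x} - L)) ∂μ = μ K * μ L := by
  set shear : G × G → G × G := fun z => (z.1, z.2 - z.1)
  have hshear : MeasurePreserving shear (μ.prod μ) (μ.prod μ) :=
    measurePreserving_prod_sub μ μ
  have hsec : ∀ x, K ∩ ({x} - L) = (fun y => (y, x)) ⁻¹' (shear ⁻¹' K ×ˢ L) := by
    intro x
    ext y
    simp only [shear, mem_inter_iff, mem_preimage, mem_prod, mem_singleton_sub_iff]
  simp_rw [hsec]
  rw [← Measure.prod_apply_symm (hshear.measurable (hK.prod hL)),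
    hshear.measure_preimage (hK.prod hL).nullMeasurableSet, Measure.prod_prod]

lemma convex_combo_mem_inter_singleton_sub {E : Type*} [AddCommGroup E] [Module ℝ E]
    {K L : Set E} (hK : Convex ℝ K) (hL : Convex ℝ L) {x y a b : E}
    (ha : a ∈ K ∩ ({x} - L)) (hb : b ∈ K ∩ ({y} - L)) {s t : ℝ}
    (hs : 0 ≤ s) (ht : 0 ≤ t) (hst : s + t = 1) :
    s • a + t • b ∈ K ∩ ({s • x + t • y} - L) := by
  rw [mem_inter_iff, mem_singleton_sub_iff] at ha hb ⊢
  refine ⟨hK ha.1 hb.1 hs ht hst, ?_⟩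
  convert hL ha.2 hb.2 hs ht hst using 1
  module

section Haar

variable {E : Type*} [NormedAddCommGroup E] [NormedSpace ℝ E]

def truncatedCone (A : Set E) : Set (E × ℝ) := {p | p.2 ∈ Icc 0 1 ∧ p.1 ∈ p.2 • A}

lemma isCompact_truncatedCone {A : Set E} (hA : IsCompact A) : IsCompact (truncatedCone A) := by
  have : truncatedCone A = (fun p : E × ℝ => (p.2 • p.1, p.2)) '' (A ×ˢ Icc 0 1) := by
    ext ⟨u, s⟩
    simp only [truncatedCone, mem_ofPred_eq, mem_smul_set, mem_image, mem_prod, Prod.exists,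
      Prod.mk.injEq]
    constructor
    · rintro ⟨hs, a, ha, rfl⟩
      exact ⟨a, s, ⟨ha, hs⟩, rfl, rfl⟩
    · rintro ⟨a, s, ⟨ha, hs⟩, rfl, rfl⟩
      exact ⟨hs, a, ha, rfl⟩
  rw [this]
  exact (hA.prod isCompact_Icc).image (by fun_prop)

variable [MeasurableSpace E] [BorelSpace E] [FiniteDimensional ℝ E]
  (μ : Measure E) [μ.IsAddHaarMeasure]

lemma lintegral_setLIntegral_truncatedCone {A : Set E} (hA : IsCompact A)
    (hE : 0 < finrank ℝ E) :
    ∫⁻ u, (∫⁻ s in Prod.mk u ⁻¹' truncatedCone A,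
        ENNReal.ofReal (finrank ℝ E * (1 - s) ^ (finrank ℝ E - 1))) ∂μ =
      ((2 * finrank ℝ E).choose (finrank ℝ E) : ℝ≥0∞)⁻¹ * μ A := by
  set n := finrank ℝ E
  set w : ℝ → ℝ≥0∞ := fun s => ENNReal.ofReal (n * (1 - s) ^ (n - 1))
  have hC : MeasurableSet (truncatedCone A) := (isCompact_truncatedCone hA).isClosed.measurableSet
  have hw : Measurable w := by fun_prop
  calc ∫⁻ u, (∫⁻ s in Prod.mk u ⁻¹' truncatedCone A, w s) ∂μ
      = ∫⁻ u, (∫⁻ s, (truncatedCone A).indicator (fun p => w p.2) (u, s)) ∂μ := by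
        refine lintegral_congr fun u => ?_
        rw [← lintegral_indicator (measurable_prodMk_left hC)]
        rfl
    _ = ∫⁻ s, ∫⁻ u, (truncatedCone A).indicator (fun p => w p.2) (u, s) ∂μ :=
        lintegral_lintegral_swap ((hw.comp measurable_snd).indicator hC).aemeasurable
    _ = ∫⁻ s, (Icc 0 1).indicator (fun s => w s * ENNReal.ofReal (s ^ n) * μ A) s := by
        refine lintegral_congr fun s => ?_
        by_cases hs : s ∈ Icc (0:ℝ) 1
        · have hsec : (fun u => (truncatedCone A).indicator (fun p => w p.2) (u, s)) =
              (s • A).indicator fun _ => w s := by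
            ext u
            by_cases hu : u ∈ s • A
            · rw [indicator_of_mem hu,
                indicator_of_mem (show (u, s) ∈ truncatedCone A from ⟨hs, hu⟩)]
            · rw [indicator_of_notMem hu, indicator_of_notMem fun h => hu h.2]
          rw [hsec, lintegral_indicator_const (hA.smul s).isClosed.measurableSet,
            Measure.addHaar_smul_of_nonneg μ hs.1, indicator_of_mem hs, mul_assoc]
        · have hsec : ∀ u, (u, s) ∉ truncatedCone A := fun u h => hs h.1
          simp [indicator_of_notMem hs, indicator_of_notMem (hsec _)]
    _ = ∫⁻ s in Icc 0 1, w s * ENNReal.ofReal (s ^ n) * μ A :=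
        lintegral_indicator measurableSet_Icc _
    _ = _ := by
        rw [lintegral_mul_const _ (by fun_prop), lintegral_Icc_mul_one_sub_pow_pred_mul_pow hE]

theorem mul_measure_le_choose_mul_lintegral {A : Set E} (hA : IsCompact A)
    (hE : 0 < finrank ℝ E) {f : E → ℝ≥0∞} {M : ℝ≥0∞}
    (hf : ∀ s ∈ Icc (0:ℝ) 1, ∀ a ∈ A,
      ENNReal.ofReal ((1 - s) ^ finrank ℝ E) * M ≤ f (s • a)) :
    M * μ A ≤ (2 * finrank ℝ E).choose (finrank ℝ E) * ∫⁻ u, f u ∂μ := by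
  have hsec : ∀ u : E, IsCompact (Prod.mk u ⁻¹' truncatedCone A) := fun u =>
    isCompact_Icc.of_isClosed_subset
      ((isCompact_truncatedCone hA).isClosed.preimage (by fun_prop)) fun s hs => hs.1
  have hchoose : ((2 * finrank ℝ E).choose (finrank ℝ E) : ℝ≥0∞) ≠ 0 := by
    exact_mod_cast (Nat.choose_pos (by omega)).ne'
  rw [mul_comm M, ← ENNReal.inv_mul_le_iff hchoose (ENNReal.natCast_ne_top _), ← mul_assoc,
    ← lintegral_setLIntegral_truncatedCone μ hA hE]
  calc (∫⁻ u, (∫⁻ s in Prod.mk u ⁻¹' truncatedCone A,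
        ENNReal.ofReal (finrank ℝ E * (1 - s) ^ (finrank ℝ E - 1))) ∂μ) * M
      ≤ ∫⁻ u, (∫⁻ s in Prod.mk u ⁻¹' truncatedCone A,
        ENNReal.ofReal (finrank ℝ E * (1 - s) ^ (finrank ℝ E - 1))) * M ∂μ :=
        lintegral_mul_const_le _ _
    _ ≤ ∫⁻ u, f u ∂μ := lintegral_mono fun u =>
        setLIntegral_mul_one_sub_pow_pred_mul_le hE (hsec u) (fun s hs => hs.1)
          fun s ⟨hs, a, ha, (hau : s • a = u)⟩ => hau ▸ hf s hs a ha

lemma ofReal_one_sub_pow_mul_measure_inter_singleton_sub_le {K L : Set E} (hK : Convex ℝ K)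
    (hL : Convex ℝ L) {x y b : E} (hb : b ∈ K ∩ ({y} - L)) {s : ℝ}
    (hs0 : 0 ≤ s) (hs1 : s ≤ 1) :
    ENNReal.ofReal ((1 - s) ^ finrank ℝ E) * μ (K ∩ ({x} - L)) ≤
      μ (K ∩ ({x + s • (y - x)} - L)) := by
  rw [← abs_of_nonneg (pow_nonneg (sub_nonneg.2 hs1) _), ← Measure.addHaar_image_homothety μ b]
  refine measure_mono ?_
  rintro _ ⟨a, ha, rfl⟩
  rw [AffineMap.homothety_apply, vsub_eq_sub, vadd_eq_add,
    show (1 - s) • (a - b) + b = (1 - s) • a + s • b by module,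
    show x + s • (y - x) = (1 - s) • x + s • y by module]
  exact convex_combo_mem_inter_singleton_sub hK hL ha hb (sub_nonneg.2 hs1) hs0 (by ring)

end Haar

theorem rogers_shephard_two_bodies_general (n : ℕ) (hn : 0 < n)
    (K L : Set (EuclideanSpace ℝ (Fin n)))
    (hKc : IsCompact K) (hKconv : Convex ℝ K)
    (hLc : IsCompact L) (hLconv : Convex ℝ L) :
    (⨆ x₀ : EuclideanSpace ℝ (Fin n), volume (K ∩ ({x₀} - L))) * volume (K + L) ≤
      (Nat.choose (2 * n) n : ℝ≥0∞) * (volume K * volume L) := by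
  rw [ENNReal.iSup_mul]
  refine iSup_le fun x₀ => ?_
  have hbound : ∀ s ∈ Icc (0:ℝ) 1, ∀ a ∈ -x₀ +ᵥ (K + L),
      ENNReal.ofReal ((1 - s) ^ finrank ℝ (EuclideanSpace ℝ (Fin n))) *
        volume (K ∩ ({x₀} - L)) ≤ volume (K ∩ ({x₀ + s • a} - L)) := by
    rintro s ⟨hs0, hs1⟩ _ ⟨_, ⟨k, hk, l, hl, rfl⟩, rfl⟩
    dsimp only
    rw [vadd_eq_add, neg_add_eq_sub]
    exact ofReal_one_sub_pow_mul_measure_inter_singleton_sub_le volume hKconv hLconv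
      ⟨hk, mem_singleton_sub_iff.2 ((add_sub_cancel_left k l).symm ▸ hl)⟩ hs0 hs1
  calc volume (K ∩ ({x₀} - L)) * volume (K + L)
      = volume (K ∩ ({x₀} - L)) * volume (-x₀ +ᵥ (K + L)) := by rw [measure_vadd]
    _ ≤ (2 * n).choose n * ∫⁻ u, volume (K ∩ ({x₀ + u} - L)) := by
        simpa only [finrank_euclideanSpace_fin] using mul_measure_le_choose_mul_lintegral volume
          ((hKc.add hLc).vadd (-x₀)) (by rwa [finrank_euclideanSpace_fin]) hbound
    _ = (2 * n).choose n * (volume K * volume L) := by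
        rw [lintegral_add_left_eq_self (fun x => volume (K ∩ ({x} - L))),
          lintegral_measure_inter_singleton_sub volume hKc.measurableSet hLc.measurableSet]

theorem rogers_shephard_two_bodies (n : ℕ) (hn : 0 < n)
    (K L : Set (EuclideanSpace ℝ (Fin n)))
    (hKc : IsCompact K) (hKconv : Convex ℝ K) (hKint : (interior K).Nonempty)
    (hLc : IsCompact L) (hLconv : Convex ℝ L) (hLint : (interior L).Nonempty) :
    (⨆ x₀ : EuclideanSpace ℝ (Fin n), volume (K ∩ ({x₀} - L))) * volume (K + L) ≤
      (Nat.choose (2 * n) n : ℝ≥0∞) * (volume K * volume L) :=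
  rogers_shephard_two_bodies_general n hn K L hKc hKconv hLc hLconv
end

section
/- For any two convex bodies K, L in R^n containing the origin in their interiors, |(K ∩ L)°| · |((K - L)/2)°| ≤ 2^n |K°| |L°|, where K° denotes the polar body. Consequently, |K ∩ L| · |conv(K ∪ (-L))| ≤ 2^n |K| |L|, using (K ∩ L)° = conv(K° ∪ L°) and (K - L)/2 ⊆ conv(K ∪ (-L)). -/
open MeasureTheory Set Pointwise
open scoped ENNReal
open scoped RealInnerProductSpace

def polarBody {n : ℕ} (K : Set (EuclideanSpace ℝ (Fin n))) :
    Set (EuclideanSpace ℝ (Fin n)) :=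
  {x | ∀ y ∈ K, ⟪x, y⟫ ≤ 1}

/-!
For convex bodies `A`, `B` with gauges `g_A`, `g_B`, consider the convex body
`D = {(x, y) | g_A x + g_B y ≤ 1}` in `E × E` and its diagonal slice `N = {x | g_A x + g_B x ≤ 1}`.
Slicing `D` along the second factor gives `|D| = J(A) |B|` with `J(C) = ∫ (1 - g_C)₊ⁿ`. Slicing it
after the shear `(x, y) ↦ (x, x - y)` instead, the slice over `b` contains a translate of
`(1 - g_H b) • N`, where `H = conv (A ∪ -B)`: by convexity of `D`, because every point of `H` is a
difference `x - y` with `(x, y) ∈ D`. Hence `J(H) |N| ≤ J(A) |B|`, and since `J(C) / |C|` does not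
depend on `C` (compute `|D|` for the pair `A`, `H` in both orders) this is `|N| |H| ≤ |A| |B|`.

With `A = K°`, `B = (-L)°` the gauges are the support functions of `K` and `-L`, so
`N = (K - L)°` and `((K - L) / 2)° = 2 N`, while `H = (K ∩ L)°` by the bipolar theorem.
With `A = K`, `B = L` one has `K ∩ L ⊆ 2 N`.
-/

open Topology Module Metric

section Gauge

variable {E : Type*} [NormedAddCommGroup E] [NormedSpace ℝ E] {C : Set E}

theorem gauge_le_one_iff_mem (hCc : IsClosed C) (hCconv : Convex ℝ C) (hC0 : C ∈ 𝓝 0)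
    {x : E} : gauge C x ≤ 1 ↔ x ∈ C := by
  rw [gauge_le_one_iff_mem_closure hCconv hC0, hCc.closure_eq]

theorem setOf_gauge_le_eq_smul (hCc : IsClosed C) (hCconv : Convex ℝ C) (hC0 : C ∈ 𝓝 0)
    {t : ℝ} (ht : 0 < t) : {x | gauge C x ≤ t} = t • C := by
  ext x
  rw [mem_smul_set_iff_inv_smul_mem₀ ht.ne', ← gauge_le_one_iff_mem hCc hCconv hC0,
    gauge_smul_of_nonneg (inv_nonneg.2 ht.le), smul_eq_mul, inv_mul_le_iff₀ ht, mul_one,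
    mem_ofPred_eq]

theorem eq_zero_of_gauge_le_zero (hCb : Bornology.IsBounded C) (hC0 : C ∈ 𝓝 0) {x : E}
    (hx : gauge C x ≤ 0) : x = 0 :=
  (gauge_eq_zero (absorbent_nhds_zero hC0) (NormedSpace.isVonNBounded_of_isBounded ℝ hCb)).1
    (hx.antisymm (gauge_nonneg x))

theorem mem_gauge_smul (hCc : IsCompact C) (hCconv : Convex ℝ C) (hC0 : C ∈ 𝓝 0) (x : E) :
    x ∈ gauge C x • C := by
  rcases (gauge_nonneg x).eq_or_lt with hx | hx
  · rw [← hx, eq_zero_of_gauge_le_zero hCc.isBounded hC0 hx.ge,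
      zero_smul_set ⟨0, mem_of_mem_nhds hC0⟩]
    rfl
  · rw [← setOf_gauge_le_eq_smul hCc.isClosed hCconv hC0 hx]
    exact le_rfl (α := ℝ)

theorem convexOn_gauge (hCconv : Convex ℝ C) (hC0 : C ∈ 𝓝 0) : ConvexOn ℝ univ (gauge C) :=
  ⟨convex_univ, fun x _ y _ a b ha hb _ => by
    simpa only [gauge_smul_of_nonneg ha, gauge_smul_of_nonneg hb, smul_eq_mul] using
      gauge_add_le hCconv (absorbent_nhds_zero hC0) (a • x) (b • y)⟩

theorem measurable_ofReal_one_sub_gauge_pow [MeasurableSpace E] [BorelSpace E]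
    (hCconv : Convex ℝ C) (hC0 : C ∈ 𝓝 0) (k : ℕ) :
    Measurable fun x => ENNReal.ofReal (1 - gauge C x) ^ k :=
  ((continuous_const.sub (continuous_gauge hCconv hC0)).measurable.ennreal_ofReal).pow_const k

theorem addHaar_setOf_gauge_le [Nontrivial E] [FiniteDimensional ℝ E] [MeasurableSpace E]
    [BorelSpace E] (μ : Measure E) [μ.IsAddHaarMeasure] (hCc : IsCompact C)
    (hCconv : Convex ℝ C) (hC0 : C ∈ 𝓝 0) (t : ℝ) :
    μ {x | gauge C x ≤ t} = ENNReal.ofReal t ^ finrank ℝ E * μ C := by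
  rcases le_or_gt t 0 with ht | ht
  · rw [ENNReal.ofReal_of_nonpos ht, zero_pow finrank_pos.ne', zero_mul]
    exact measure_mono_null
      (fun x hx => eq_zero_of_gauge_le_zero hCc.isBounded hC0 (le_trans hx ht))
      (measure_singleton 0)
  · rw [setOf_gauge_le_eq_smul hCc.isClosed hCconv hC0 ht,
      Measure.addHaar_smul_of_nonneg μ ht.le, ENNReal.ofReal_pow ht.le]

end Gauge

section ConvexHullUnion

variable {E : Type*} [AddCommGroup E] [Module ℝ E] [TopologicalSpace E] {A B : Set E}

theorem convexHull_union_mem_nhds {x : E} (hA : A ∈ 𝓝 x) : convexHull ℝ (A ∪ B) ∈ 𝓝 x :=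
  Filter.mem_of_superset hA (subset_union_left.trans (subset_convexHull ℝ _))

theorem isCompact_convexHull_union [IsTopologicalAddGroup E] [ContinuousSMul ℝ E]
    (hAc : IsCompact A) (hAconv : Convex ℝ A) (hAne : A.Nonempty)
    (hBc : IsCompact B) (hBconv : Convex ℝ B) (hBne : B.Nonempty) :
    IsCompact (convexHull ℝ (A ∪ B)) := by
  have hjoin : convexJoin ℝ A B =
      (fun p : ℝ × E × E => p.2.1 + p.1 • (p.2.2 - p.2.1)) '' (Icc 0 1 ×ˢ A ×ˢ B) := by
    ext x
    simp only [mem_convexJoin, segment_eq_image', mem_image, mem_prod, Prod.exists]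
    constructor
    · rintro ⟨a, ha, b, hb, θ, hθ, rfl⟩
      exact ⟨θ, a, b, ⟨hθ, ha, hb⟩, rfl⟩
    · rintro ⟨θ, a, b, ⟨hθ, ha, hb⟩, rfl⟩
      exact ⟨a, ha, b, hb, θ, hθ, rfl⟩
  rw [hAconv.convexHull_union hBconv hAne hBne, hjoin]
  exact (isCompact_Icc.prod (hAc.prod hBc)).image (by fun_prop)

end ConvexHullUnion

theorem isCompact_convexHull_union_neg {E : Type*} [NormedAddCommGroup E] [NormedSpace ℝ E]
    {A B : Set E} (hAc : IsCompact A) (hAconv : Convex ℝ A) (hA0 : A ∈ 𝓝 0)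
    (hBc : IsCompact B) (hBconv : Convex ℝ B) (hB0 : B ∈ 𝓝 0) :
    IsCompact (convexHull ℝ (A ∪ -B)) :=
  isCompact_convexHull_union hAc hAconv ⟨0, mem_of_mem_nhds hA0⟩ hBc.neg hBconv.neg
    ⟨0, by simpa using mem_of_mem_nhds hB0⟩

section GaugeBalls

variable {E : Type*} [AddCommGroup E] [Module ℝ E]

def gaugeProdBall (A B : Set E) : Set (E × E) :=
  {p | gauge A p.1 + gauge B p.2 ≤ 1}

def gaugeAddBall (A B : Set E) : Set E :=
  {x | gauge A x + gauge B x ≤ 1}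

theorem inter_subset_two_smul_gaugeAddBall (A B : Set E) :
    A ∩ B ⊆ (2 : ℝ) • gaugeAddBall A B := by
  intro x hx
  rw [mem_smul_set_iff_inv_smul_mem₀ two_ne_zero, gaugeAddBall, mem_ofPred_eq,
    gauge_smul_of_nonneg (inv_nonneg.2 zero_le_two),
    gauge_smul_of_nonneg (inv_nonneg.2 zero_le_two), smul_eq_mul, smul_eq_mul, ← mul_add,
    inv_mul_le_iff₀ two_pos, mul_one]
  linarith [gauge_le_one_of_mem hx.1, gauge_le_one_of_mem hx.2]

end GaugeBalls

section GaugeProdBall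

variable {E : Type*} [NormedAddCommGroup E] [NormedSpace ℝ E] {A B : Set E}

theorem continuous_gauge_add_gauge (hAconv : Convex ℝ A) (hA0 : A ∈ 𝓝 0)
    (hBconv : Convex ℝ B) (hB0 : B ∈ 𝓝 0) :
    Continuous fun p : E × E => gauge A p.1 + gauge B p.2 :=
  ((continuous_gauge hAconv hA0).comp continuous_fst).add
    ((continuous_gauge hBconv hB0).comp continuous_snd)

theorem isClosed_gaugeProdBall (hAconv : Convex ℝ A) (hA0 : A ∈ 𝓝 0)
    (hBconv : Convex ℝ B) (hB0 : B ∈ 𝓝 0) : IsClosed (gaugeProdBall A B) :=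
  isClosed_le (continuous_gauge_add_gauge hAconv hA0 hBconv hB0) continuous_const

theorem gaugeProdBall_mem_nhds (hAconv : Convex ℝ A) (hA0 : A ∈ 𝓝 0)
    (hBconv : Convex ℝ B) (hB0 : B ∈ 𝓝 0) : gaugeProdBall A B ∈ 𝓝 0 :=
  Filter.mem_of_superset
    ((isOpen_lt (continuous_gauge_add_gauge hAconv hA0 hBconv hB0)
      (continuous_const (y := (1 : ℝ)))).mem_nhds (by simp [gauge_zero]))
    fun p (hp : gauge A p.1 + gauge B p.2 < 1) => hp.le

theorem isCompact_gaugeProdBall (hAc : IsCompact A) (hAconv : Convex ℝ A) (hA0 : A ∈ 𝓝 0)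
    (hBc : IsCompact B) (hBconv : Convex ℝ B) (hB0 : B ∈ 𝓝 0) :
    IsCompact (gaugeProdBall A B) := by
  refine (hAc.prod hBc).of_isClosed_subset (isClosed_gaugeProdBall hAconv hA0 hBconv hB0)
    fun p (hp : gauge A p.1 + gauge B p.2 ≤ 1) => ⟨?_, ?_⟩
  · exact (gauge_le_one_iff_mem hAc.isClosed hAconv hA0).1
      (by linarith [gauge_nonneg (s := B) p.2])
  · exact (gauge_le_one_iff_mem hBc.isClosed hBconv hB0).1
      (by linarith [gauge_nonneg (s := A) p.1])

theorem convex_gaugeProdBall (hAconv : Convex ℝ A) (hA0 : A ∈ 𝓝 0)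
    (hBconv : Convex ℝ B) (hB0 : B ∈ 𝓝 0) : Convex ℝ (gaugeProdBall A B) := by
  intro p hp q hq a b ha hb hab
  have hgA := (convexOn_gauge hAconv hA0).2 (mem_univ p.1) (mem_univ q.1) ha hb hab
  have hgB := (convexOn_gauge hBconv hB0).2 (mem_univ p.2) (mem_univ q.2) ha hb hab
  simp only [gaugeProdBall, mem_ofPred_eq, Prod.fst_add, Prod.snd_add, Prod.smul_fst,
    Prod.smul_snd, smul_eq_mul] at hp hq hgA hgB ⊢
  nlinarith [mul_le_mul_of_nonneg_left hp ha, mul_le_mul_of_nonneg_left hq hb]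

theorem convexHull_union_neg_subset_image_sub (hAconv : Convex ℝ A) (hA0 : A ∈ 𝓝 0)
    (hBconv : Convex ℝ B) (hB0 : B ∈ 𝓝 0) :
    convexHull ℝ (A ∪ -B) ⊆ (fun p : E × E => p.1 - p.2) '' gaugeProdBall A B := by
  refine convexHull_min ?_ ((convex_gaugeProdBall hAconv hA0 hBconv hB0).linear_image
    (LinearMap.fst ℝ E E - LinearMap.snd ℝ E E))
  rintro c (hc | hc)
  · exact ⟨(c, 0), by simpa [gaugeProdBall] using gauge_le_one_of_mem hc, by simp⟩
  · exact ⟨(0, -c), by simpa [gaugeProdBall] using gauge_le_one_of_mem (mem_neg.1 hc), by simp⟩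

theorem vadd_smul_gaugeAddBall_subset (hAconv : Convex ℝ A) (hA0 : A ∈ 𝓝 0)
    (hBconv : Convex ℝ B) (hB0 : B ∈ 𝓝 0) {x c : E} (hxc : (x, x - c) ∈ gaugeProdBall A B)
    {r : ℝ} (hr₀ : 0 ≤ r) (hr₁ : r ≤ 1) :
    (r • x) +ᵥ (1 - r) • gaugeAddBall A B ⊆ {y | (y, y - r • c) ∈ gaugeProdBall A B} := by
  rintro _ ⟨_, ⟨z, hz, rfl⟩, rfl⟩
  have hcomb : (r • x + (1 - r) • z, r • x + (1 - r) • z - r • c) =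
      r • (x, x - c) + (1 - r) • (z, z) := by
    ext <;> simp only [Prod.fst_add, Prod.snd_add, Prod.smul_fst, Prod.smul_snd]
    module
  show (r • x + (1 - r) • z, r • x + (1 - r) • z - r • c) ∈ gaugeProdBall A B
  rw [hcomb]
  exact convex_gaugeProdBall hAconv hA0 hBconv hB0 hxc (show (z, z) ∈ gaugeProdBall A B from hz)
    hr₀ (sub_nonneg.2 hr₁) (add_sub_cancel r 1)

end GaugeProdBall

section GaugeIntegral

variable {E : Type*} [NormedAddCommGroup E] [NormedSpace ℝ E] [FiniteDimensional ℝ E]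
  [MeasurableSpace E] [BorelSpace E] (μ : Measure E) [μ.IsAddHaarMeasure] {A B C : Set E}

theorem addHaar_two_smul (S : Set E) : μ ((2 : ℝ) • S) = 2 ^ finrank ℝ E * μ S := by
  rw [Measure.addHaar_smul_of_nonneg μ zero_le_two, ENNReal.ofReal_pow zero_le_two,
    ENNReal.ofReal_ofNat]

noncomputable def gaugeIntegral (C : Set E) : ℝ≥0∞ :=
  ∫⁻ x, ENNReal.ofReal (1 - gauge C x) ^ finrank ℝ E ∂μ

theorem prod_gaugeProdBall [Nontrivial E] (hAconv : Convex ℝ A) (hA0 : A ∈ 𝓝 0)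
    (hBc : IsCompact B) (hBconv : Convex ℝ B) (hB0 : B ∈ 𝓝 0) :
    μ.prod μ (gaugeProdBall A B) = gaugeIntegral μ A * μ B := by
  rw [Measure.prod_apply (isClosed_gaugeProdBall hAconv hA0 hBconv hB0).measurableSet,
    gaugeIntegral, ← lintegral_mul_const _ (measurable_ofReal_one_sub_gauge_pow hAconv hA0 _)]
  congr with x
  rw [← addHaar_setOf_gauge_le μ hBc hBconv hB0]
  congr with y
  show gauge A x + gauge B y ≤ 1 ↔ gauge B y ≤ 1 - gauge A x
  exact le_sub_iff_add_le'.symm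

theorem prod_gaugeProdBall_comm (hAconv : Convex ℝ A) (hA0 : A ∈ 𝓝 0)
    (hBconv : Convex ℝ B) (hB0 : B ∈ 𝓝 0) :
    μ.prod μ (gaugeProdBall A B) = μ.prod μ (gaugeProdBall B A) := by
  have hswap : gaugeProdBall B A = Prod.swap ⁻¹' gaugeProdBall A B := by
    ext p
    simp only [gaugeProdBall, mem_preimage, mem_ofPred_eq, Prod.fst_swap, Prod.snd_swap,
      add_comm]
  rw [hswap, Measure.measurePreserving_swap.measure_preimage
    (isClosed_gaugeProdBall hAconv hA0 hBconv hB0).measurableSet.nullMeasurableSet]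

theorem prod_gaugeProdBall_eq_lintegral (hAconv : Convex ℝ A) (hA0 : A ∈ 𝓝 0)
    (hBconv : Convex ℝ B) (hB0 : B ∈ 𝓝 0) :
    μ.prod μ (gaugeProdBall A B) = ∫⁻ b, μ {x | (x, x - b) ∈ gaugeProdBall A B} ∂μ := by
  have hshear :
      MeasurePreserving (fun p : E × E => (p.1, p.1 - p.2)) (μ.prod μ) (μ.prod μ) := by
    convert ((MeasurePreserving.id μ).prod (Measure.measurePreserving_neg μ)).comp
      (measurePreserving_prod_sub μ μ) using 1
    ext p <;> simp
  have hD := (isClosed_gaugeProdBall hAconv hA0 hBconv hB0).measurableSet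
  rw [← hshear.measure_preimage hD.nullMeasurableSet,
    Measure.prod_apply_symm (hshear.measurable hD)]
  rfl

theorem gaugeIntegral_ne_zero [Nontrivial E] (hCc : IsCompact C) (hCconv : Convex ℝ C)
    (hC0 : C ∈ 𝓝 0) : gaugeIntegral μ C ≠ 0 := by
  have h := (Measure.measure_pos_of_mem_nhds (μ.prod μ)
    (gaugeProdBall_mem_nhds hCconv hC0 hCconv hC0)).ne'
  rw [prod_gaugeProdBall μ hCconv hC0 hCc hCconv hC0] at h
  exact left_ne_zero_of_mul h

theorem gaugeIntegral_ne_top [Nontrivial E] (hCc : IsCompact C) (hCconv : Convex ℝ C)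
    (hC0 : C ∈ 𝓝 0) : gaugeIntegral μ C ≠ ⊤ := by
  intro htop
  have h := (isCompact_gaugeProdBall hCc hCconv hC0 hCc hCconv hC0).measure_lt_top
    (μ := μ.prod μ)
  rw [prod_gaugeProdBall μ hCconv hC0 hCc hCconv hC0, htop,
    ENNReal.top_mul (Measure.measure_pos_of_mem_nhds μ hC0).ne'] at h
  exact h.false

theorem ofReal_one_sub_gauge_convexHull_pow_mul_le [Nontrivial E]
    (hAc : IsCompact A) (hAconv : Convex ℝ A) (hA0 : A ∈ 𝓝 0)
    (hBc : IsCompact B) (hBconv : Convex ℝ B) (hB0 : B ∈ 𝓝 0) (b : E) :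
    ENNReal.ofReal (1 - gauge (convexHull ℝ (A ∪ -B)) b) ^ finrank ℝ E * μ (gaugeAddBall A B) ≤
      μ {x | (x, x - b) ∈ gaugeProdBall A B} := by
  set r := gauge (convexHull ℝ (A ∪ -B)) b
  rcases le_or_gt 1 r with hr | hr
  · rw [ENNReal.ofReal_of_nonpos (sub_nonpos.2 hr), zero_pow finrank_pos.ne', zero_mul]
    exact zero_le
  obtain ⟨c, hcH, hbc⟩ :=
    mem_gauge_smul (isCompact_convexHull_union_neg hAc hAconv hA0 hBc hBconv hB0)
      (convex_convexHull ℝ _) (convexHull_union_mem_nhds hA0) b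
  obtain ⟨⟨x, y⟩, hxy, rfl⟩ := convexHull_union_neg_subset_image_sub hAconv hA0 hBconv hB0 hcH
  have hx : (x, x - (x - y)) ∈ gaugeProdBall A B := by rwa [sub_sub_cancel]
  calc ENNReal.ofReal (1 - r) ^ finrank ℝ E * μ (gaugeAddBall A B)
      = μ ((r • x) +ᵥ (1 - r) • gaugeAddBall A B) := by
        rw [measure_vadd, Measure.addHaar_smul_of_nonneg μ (sub_nonneg.2 hr.le),
          ENNReal.ofReal_pow (sub_nonneg.2 hr.le)]
    _ ≤ μ {z | (z, z - r • (x - y)) ∈ gaugeProdBall A B} := measure_mono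
        (vadd_smul_gaugeAddBall_subset hAconv hA0 hBconv hB0 hx (gauge_nonneg _) hr.le)
    _ = μ {z | (z, z - b) ∈ gaugeProdBall A B} := by rw [← hbc]

theorem addHaar_gaugeAddBall_mul_addHaar_convexHull_le [Nontrivial E]
    (hAc : IsCompact A) (hAconv : Convex ℝ A) (hA0 : A ∈ 𝓝 0)
    (hBc : IsCompact B) (hBconv : Convex ℝ B) (hB0 : B ∈ 𝓝 0) :
    μ (gaugeAddBall A B) * μ (convexHull ℝ (A ∪ -B)) ≤ μ A * μ B := by
  set H := convexHull ℝ (A ∪ -B)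
  have hHc : IsCompact H := isCompact_convexHull_union_neg hAc hAconv hA0 hBc hBconv hB0
  have hHconv : Convex ℝ H := convex_convexHull ℝ _
  have hH0 : H ∈ 𝓝 0 := convexHull_union_mem_nhds hA0
  have hslices : gaugeIntegral μ H * μ (gaugeAddBall A B) ≤ gaugeIntegral μ A * μ B := by
    rw [← prod_gaugeProdBall μ hAconv hA0 hBc hBconv hB0,
      prod_gaugeProdBall_eq_lintegral μ hAconv hA0 hBconv hB0, gaugeIntegral,
      ← lintegral_mul_const _ (measurable_ofReal_one_sub_gauge_pow hHconv hH0 _)]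
    exact lintegral_mono
      (ofReal_one_sub_gauge_convexHull_pow_mul_le μ hAc hAconv hA0 hBc hBconv hB0)
  have hsymm : gaugeIntegral μ A * μ H = gaugeIntegral μ H * μ A := by
    rw [← prod_gaugeProdBall μ hAconv hA0 hHc hHconv hH0,
      prod_gaugeProdBall_comm μ hAconv hA0 hHconv hH0,
      prod_gaugeProdBall μ hHconv hH0 hAc hAconv hA0]
  rw [← ENNReal.mul_le_mul_iff_right (gaugeIntegral_ne_zero μ hHc hHconv hH0)
    (gaugeIntegral_ne_top μ hHc hHconv hH0)]
  calc gaugeIntegral μ H * (μ (gaugeAddBall A B) * μ H)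
      = gaugeIntegral μ H * μ (gaugeAddBall A B) * μ H := (mul_assoc _ _ _).symm
    _ ≤ gaugeIntegral μ A * μ B * μ H := by gcongr
    _ = gaugeIntegral μ H * (μ A * μ B) := by rw [mul_right_comm, hsymm, mul_assoc]

end GaugeIntegral

section SupportFunction

variable {F : Type*} [NormedAddCommGroup F] [InnerProductSpace ℝ F] {K M : Set F}

noncomputable def supportFunction (K : Set F) (x : F) : ℝ :=
  sSup ((⟪x, ·⟫) '' K)

theorem bddAbove_inner_image (hK : IsCompact K) (x : F) : BddAbove ((⟪x, ·⟫) '' K) :=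
  (hK.image (continuous_const.inner continuous_id)).bddAbove

theorem le_supportFunction (hK : IsCompact K) {k : F} (hk : k ∈ K) (x : F) :
    ⟪x, k⟫ ≤ supportFunction K x :=
  le_csSup (bddAbove_inner_image hK x) ⟨k, hk, rfl⟩

theorem supportFunction_le_iff (hK : IsCompact K) (hKne : K.Nonempty) {x : F} {t : ℝ} :
    supportFunction K x ≤ t ↔ ∀ k ∈ K, ⟪x, k⟫ ≤ t :=
  (csSup_le_iff (bddAbove_inner_image hK x) (hKne.image _)).trans forall_mem_image

theorem supportFunction_add (hK : IsCompact K) (hKne : K.Nonempty) (hM : IsCompact M)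
    (hMne : M.Nonempty) (x : F) :
    supportFunction (K + M) x = supportFunction K x + supportFunction M x := by
  rw [supportFunction, supportFunction, supportFunction, ← csSup_add (hKne.image _)
    (bddAbove_inner_image hK x) (hMne.image _) (bddAbove_inner_image hM x)]
  exact congrArg sSup (image_add (innerₛₗ ℝ x))

end SupportFunction

section Polar

variable {n : ℕ} {K L M : Set (EuclideanSpace ℝ (Fin n))}

variable (K) in
theorem polarBody_eq_iInter : polarBody K = ⋂ y ∈ K, {x | ⟪y, x⟫ ≤ 1} := by
  ext x
  simp [polarBody, real_inner_comm]

variable (K) in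
theorem convex_polarBody : Convex ℝ (polarBody K) := by
  rw [polarBody_eq_iInter]
  exact convex_iInter₂ fun y _ => convex_halfSpace_le (innerₛₗ ℝ y).isLinear 1

variable (K) in
theorem isClosed_polarBody : IsClosed (polarBody K) := by
  rw [polarBody_eq_iInter]
  exact isClosed_biInter fun y _ =>
    isClosed_le (continuous_const.inner continuous_id) continuous_const

variable (K) in
theorem zero_mem_polarBody : 0 ∈ polarBody K :=
  fun y _ => by simp

theorem polarBody_antitone (h : K ⊆ L) : polarBody L ⊆ polarBody K :=
  fun _ hx y hy => hx y (h hy)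

variable (K L) in
theorem polarBody_union : polarBody (K ∪ L) = polarBody K ∩ polarBody L := by
  ext x
  simp only [polarBody, mem_ofPred_eq, mem_inter_iff, mem_union, or_imp, forall_and]

variable (K) in
theorem polarBody_neg : polarBody (-K) = -polarBody K := by
  ext x
  simp only [polarBody, mem_ofPred_eq, mem_neg, inner_neg_left]
  exact ⟨fun h y hy => by simpa using h (-y) (by simpa using hy),
    fun h y hy => by simpa using h (-y) hy⟩

variable (K) in
theorem polarBody_convexHull : polarBody (convexHull ℝ K) = polarBody K :=
  (polarBody_antitone (subset_convexHull ℝ K)).antisymm fun x hx _ hy =>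
    convexHull_min (fun y hy => hx y hy) (convex_halfSpace_le (innerₛₗ ℝ x).isLinear 1) hy

theorem polarBody_closedBall {r : ℝ} (hr : 0 < r) :
    polarBody (closedBall (0 : EuclideanSpace ℝ (Fin n)) r) = closedBall 0 r⁻¹ := by
  ext x
  simp only [polarBody, mem_ofPred_eq, mem_closedBall_zero_iff]
  constructor
  · intro h
    rcases eq_or_ne x 0 with rfl | hx
    · simpa using inv_nonneg.2 hr.le
    have hxpos : 0 < ‖x‖ := norm_pos_iff.2 hx
    have hxx := h ((r / ‖x‖) • x) (by
      rw [norm_smul, Real.norm_of_nonneg (by positivity), div_mul_cancel₀ _ hxpos.ne'])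
    rw [real_inner_smul_right, real_inner_self_eq_norm_sq] at hxx
    have hxr : r / ‖x‖ * ‖x‖ ^ 2 = ‖x‖ * r := by field_simp
    rw [← one_div, le_div_iff₀ hr]
    linarith
  · intro hx y hy
    calc ⟪x, y⟫ ≤ ‖x‖ * ‖y‖ := real_inner_le_norm x y
      _ ≤ r⁻¹ * r := mul_le_mul hx hy (norm_nonneg _) (inv_nonneg.2 hr.le)
      _ = 1 := inv_mul_cancel₀ hr.ne'

theorem isCompact_polarBody (hK : K ∈ 𝓝 0) : IsCompact (polarBody K) := by
  obtain ⟨r, hr, hrK⟩ := nhds_basis_closedBall.mem_iff.1 hK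
  refine (isCompact_closedBall (0 : EuclideanSpace ℝ (Fin n)) r⁻¹).of_isClosed_subset
    (isClosed_polarBody K) ?_
  rw [← polarBody_closedBall hr]
  exact polarBody_antitone hrK

theorem polarBody_mem_nhds_zero (hK : Bornology.IsBounded K) : polarBody K ∈ 𝓝 0 := by
  obtain ⟨r, hr, hKr⟩ := hK.subset_closedBall_lt 0 0
  refine Filter.mem_of_superset (closedBall_mem_nhds 0 (inv_pos.2 hr)) ?_
  rw [← polarBody_closedBall hr]
  exact polarBody_antitone hKr

theorem polarBody_polarBody (hKc : IsClosed K) (hKconv : Convex ℝ K) (hK0 : 0 ∈ K) :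
    polarBody (polarBody K) = K := by
  refine Subset.antisymm (fun x hx => ?_) fun k hk y hy => real_inner_comm y k ▸ hy k hk
  by_contra hxK
  obtain ⟨f, u, hfK, hfx⟩ := geometric_hahn_banach_closed_point hKconv hKc hxK
  have hu : 0 < u := by simpa using hfK 0 hK0
  set w := u⁻¹ • (InnerProductSpace.toDual ℝ _).symm f
  have hw (z : EuclideanSpace ℝ (Fin n)) : ⟪w, z⟫ = u⁻¹ * f z := by
    rw [real_inner_smul_left, InnerProductSpace.toDual_symm_apply]
  have hwK : w ∈ polarBody K := fun z hz => by
    rw [hw, inv_mul_le_iff₀ hu, mul_one]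
    exact (hfK z hz).le
  have hxw := hx w hwK
  rw [real_inner_comm, hw, inv_mul_le_iff₀ hu, mul_one] at hxw
  exact hxw.not_gt hfx

theorem polarBody_inter (hKc : IsClosed K) (hKconv : Convex ℝ K) (hK0 : K ∈ 𝓝 0)
    (hLc : IsClosed L) (hLconv : Convex ℝ L) (hL0 : L ∈ 𝓝 0) :
    polarBody (K ∩ L) = convexHull ℝ (polarBody K ∪ polarBody L) := by
  have hc : IsCompact (convexHull ℝ (polarBody K ∪ polarBody L)) :=
    isCompact_convexHull_union (isCompact_polarBody hK0) (convex_polarBody K)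
      ⟨0, zero_mem_polarBody K⟩ (isCompact_polarBody hL0) (convex_polarBody L)
      ⟨0, zero_mem_polarBody L⟩
  calc polarBody (K ∩ L)
      = polarBody (polarBody (polarBody K) ∩ polarBody (polarBody L)) := by
        rw [polarBody_polarBody hKc hKconv (mem_of_mem_nhds hK0),
          polarBody_polarBody hLc hLconv (mem_of_mem_nhds hL0)]
    _ = polarBody (polarBody (convexHull ℝ (polarBody K ∪ polarBody L))) := by
        rw [polarBody_convexHull, polarBody_union]
    _ = convexHull ℝ (polarBody K ∪ polarBody L) :=
        polarBody_polarBody hc.isClosed (convex_convexHull ℝ _)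
          (subset_convexHull ℝ _ (Or.inl (zero_mem_polarBody K)))

theorem mem_smul_polarBody_iff {r : ℝ} (hr : 0 < r) {x : EuclideanSpace ℝ (Fin n)} :
    x ∈ r • polarBody K ↔ ∀ k ∈ K, ⟪x, k⟫ ≤ r := by
  rw [mem_smul_set_iff_inv_smul_mem₀ hr.ne']
  simp only [polarBody, mem_ofPred_eq, real_inner_smul_left, inv_mul_le_iff₀ hr, mul_one]

theorem polarBody_inv_smul {r : ℝ} (hr : 0 < r) : polarBody (r⁻¹ • K) = r • polarBody K := by
  ext x
  rw [mem_smul_polarBody_iff hr]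
  simp only [polarBody, mem_ofPred_eq, ← image_smul, forall_mem_image, real_inner_smul_right,
    inv_mul_le_iff₀ hr, mul_one]

theorem gauge_polarBody (hKc : IsCompact K) (hK0 : 0 ∈ K) (x : EuclideanSpace ℝ (Fin n)) :
    gauge (polarBody K) x = supportFunction K x := by
  refine le_antisymm (le_of_forall_gt_imp_ge_of_dense fun t ht => ?_) ?_
  · have htpos : 0 < t := by simpa using (le_supportFunction hKc hK0 x).trans_lt ht
    exact gauge_le_of_mem htpos.le ((mem_smul_polarBody_iff htpos).2 fun k hk =>
      (le_supportFunction hKc hk x).trans ht.le)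
  · refine (supportFunction_le_iff hKc ⟨0, hK0⟩).2 fun k hk =>
      le_of_forall_gt_imp_ge_of_dense fun t ht => ?_
    obtain ⟨b, hb, hbt, hxb⟩ :=
      exists_lt_of_gauge_lt (absorbent_nhds_zero (polarBody_mem_nhds_zero hKc.isBounded)) ht
    exact ((mem_smul_polarBody_iff hb).1 hxb k hk).trans hbt.le

theorem polarBody_add (hKc : IsCompact K) (hK0 : 0 ∈ K) (hMc : IsCompact M) (hM0 : 0 ∈ M) :
    polarBody (K + M) = gaugeAddBall (polarBody K) (polarBody M) := by
  ext x
  rw [gaugeAddBall, mem_ofPred_eq, gauge_polarBody hKc hK0, gauge_polarBody hMc hM0,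
    ← supportFunction_add hKc ⟨0, hK0⟩ hMc ⟨0, hM0⟩,
    supportFunction_le_iff (hKc.add hMc) ⟨0 + 0, add_mem_add hK0 hM0⟩]
  rfl

end Polar

theorem polar_rogers_shephard (n : ℕ) (hn : 0 < n)
    (K L : Set (EuclideanSpace ℝ (Fin n)))
    (hKc : IsCompact K) (hKconv : Convex ℝ K)
    (hLc : IsCompact L) (hLconv : Convex ℝ L)
    (h0K : (0 : EuclideanSpace ℝ (Fin n)) ∈ interior K)
    (h0L : (0 : EuclideanSpace ℝ (Fin n)) ∈ interior L) :
    volume (polarBody (K ∩ L)) * volume (polarBody ((2 : ℝ)⁻¹ • (K - L))) ≤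
        (2 : ℝ≥0∞) ^ n * (volume (polarBody K) * volume (polarBody L)) ∧
      volume (K ∩ L) * volume (convexHull ℝ (K ∪ -L)) ≤
        (2 : ℝ≥0∞) ^ n * (volume K * volume L) := by
  have : Nonempty (Fin n) := ⟨⟨0, hn⟩⟩
  have hK0 : K ∈ 𝓝 0 := mem_interior_iff_mem_nhds.1 h0K
  have hL0 : L ∈ 𝓝 0 := mem_interior_iff_mem_nhds.1 h0L
  have h2 := addHaar_two_smul (volume : Measure (EuclideanSpace ℝ (Fin n)))
  rw [finrank_euclideanSpace_fin] at h2
  constructor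
  · have key := addHaar_gaugeAddBall_mul_addHaar_convexHull_le volume
      (isCompact_polarBody hK0) (convex_polarBody K) (polarBody_mem_nhds_zero hKc.isBounded)
      (isCompact_polarBody (neg_mem_nhds_zero _ hL0)) (convex_polarBody (-L))
      (polarBody_mem_nhds_zero hLc.neg.isBounded)
    rw [polarBody_neg, neg_neg, Measure.measure_neg] at key
    rw [polarBody_inter hKc.isClosed hKconv hK0 hLc.isClosed hLconv hL0, sub_eq_add_neg,
      polarBody_inv_smul two_pos, polarBody_add hKc (mem_of_mem_nhds hK0) hLc.neg
        (by simpa using mem_of_mem_nhds hL0), h2, polarBody_neg, mul_left_comm,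
      mul_comm (volume (convexHull ℝ _))]
    gcongr 2 ^ n * ?_
  · calc volume (K ∩ L) * volume (convexHull ℝ (K ∪ -L))
        ≤ volume ((2 : ℝ) • gaugeAddBall K L) * volume (convexHull ℝ (K ∪ -L)) := by
          gcongr
          exact inter_subset_two_smul_gaugeAddBall K L
      _ = 2 ^ n * (volume (gaugeAddBall K L) * volume (convexHull ℝ (K ∪ -L))) := by
          rw [h2, mul_assoc]
      _ ≤ 2 ^ n * (volume K * volume L) := by
          gcongr 2 ^ n * ?_
          exact addHaar_gaugeAddBall_mul_addHaar_convexHull_le volume hKc hKconv hK0 hLc hLconv hL0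
end
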